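/- (Theorem 1, feasibility of the optimization constraints.) Let φ ≥ 1, n ≥ 2φ−1, M ≥ 1, and N ≥ 1. For each agent i ∈ {1,…,N} let π^i_0, …, π^i_M ∈ ℝ^3 be waypoints; for each i and m ∈ {1,…,M} let S^i_m ⊆ ℝ^3 be a convex set containing the segment [π^i_{m−1}, π^i_m]; and for each pair i < j and each m let R^{i,j}_m ⊆ ℝ^3 be a convex set containing the segment [π^j_{m−1} − π^i_{m−1}, π^j_m − π^i_m]. Then there exist control points c^i_{m,k} ∈ ℝ^3 (i ∈ {1,…,N}, m ∈ {1,…,M}, k ∈ {0,…,n}) — namely c^i_{m,k} = π^i_{m−1} for k ≤ φ−1 and c^i_{m,k} = π^i_m for k ≥ n−φ+1, with the remaining c^i_{m,k} any points of [π^i_{m−1}, π^i_m] — such that: (1) c^i_{1,0} = π^i_0 and c^i_{M,n} = π^i_M for all i; (2) the piecewise curve p^i defined on [0,M] by p^i(t) = Σ_{k=0}^{n} c^i_{m,k} B_{k,n}(t−(m−1)) for t ∈ [m−1, m] is continuously differentiable up to order φ−1; (3) c^i_{m,k} ∈ S^i_m for all i, m, k; and (4) c^j_{m,k} − c^i_{m,k}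 ∈ R^{i,j}_m for all i < j, m, k. -/

import Mathlib

/-- The Bernstein basis polynomial `B_{k,n}(t) = C(n,k) t^k (1-t)^(n-k)`. -/
noncomputable def bernsteinBasis (n k : ℕ) (t : ℝ) : ℝ :=
  (n.choose k : ℝ) * t ^ k * (1 - t) ^ (n - k)

/-!
Take the control points of segment `m` to be `π_{m-1}` for `k < φ` and `π_m` for `k ≥ φ`.
They lie on the segments, hence in the corridors, and segment `m` of the curve is
`π_{m-1} + g(s) (π_m - π_{m-1})` with `g = ∑_{k ≥ φ} B_{k,n}`. Every `B_{k,n}` with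
`k ≥ φ` vanishes to order `φ` at `0`, and `1 - g = ∑_{k < φ} B_{k,n}` vanishes to order
`n - φ + 1 ≥ φ` at `1`. So `g`, extended by `0` to the left and by `1` to the right, is
`C^{φ-1}`, and the whole curve is the `C^{φ-1}` function `π_0 + ∑_l g(t - l) (π_{l+1} - π_l)`.
-/

open Polynomial

section ClampDerivative

variable {F : Type*} [NormedAddCommGroup F] [NormedSpace ℝ F] {f f' : ℝ → F}

theorem hasDerivAt_comp_max (hf : ∀ x, HasDerivAt f (f' x) x) {a : ℝ} (ha : f' a = 0)
    (x : ℝ) : HasDerivAt (fun y => f (max a y)) (f' (max a x)) x := by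
  rcases lt_trichotomy x a with hx | rfl | hx
  · rw [max_eq_left hx.le, ha]
    refine (hasDerivAt_const x (f a)).congr_of_eventuallyEq ?_
    filter_upwards [Iio_mem_nhds hx] with y hy
    rw [max_eq_left (le_of_lt hy)]
  · have hl : HasDerivWithinAt (fun y => f (max x y)) 0 (Set.Iic x) x :=
      (hasDerivWithinAt_const x _ (f x)).congr (fun y hy => by rw [max_eq_left hy]) (by simp)
    have hr : HasDerivWithinAt (fun y => f (max x y)) 0 (Set.Ici x) x :=
      ha ▸ (hf x).hasDerivWithinAt.congr (fun y hy => by rw [max_eq_right hy]) (by simp)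
    rw [max_self, ha, ← hasDerivWithinAt_univ, ← Set.Iic_union_Ici]
    exact hl.union hr
  · rw [max_eq_right hx.le]
    refine (hf x).congr_of_eventuallyEq ?_
    filter_upwards [Ioi_mem_nhds hx] with y hy
    rw [max_eq_right (le_of_lt hy)]

theorem hasDerivAt_comp_min (hf : ∀ x, HasDerivAt f (f' x) x) {b : ℝ} (hb : f' b = 0)
    (x : ℝ) : HasDerivAt (fun y => f (min b y)) (f' (min b x)) x := by
  rcases lt_trichotomy x b with hx | rfl | hx
  · rw [min_eq_right hx.le]
    refine (hf x).congr_of_eventuallyEq ?_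
    filter_upwards [Iio_mem_nhds hx] with y hy
    rw [min_eq_right (le_of_lt hy)]
  · have hl : HasDerivWithinAt (fun y => f (min x y)) 0 (Set.Iic x) x :=
      hb ▸ (hf x).hasDerivWithinAt.congr (fun y hy => by rw [min_eq_right hy]) (by simp)
    have hr : HasDerivWithinAt (fun y => f (min x y)) 0 (Set.Ici x) x :=
      (hasDerivWithinAt_const x _ (f x)).congr (fun y hy => by rw [min_eq_left hy]) (by simp)
    rw [min_self, hb, ← hasDerivWithinAt_univ, ← Set.Iic_union_Ici]
    exact hl.union hr
  · rw [min_eq_left hx.le, hb]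
    refine (hasDerivAt_const x (f b)).congr_of_eventuallyEq ?_
    filter_upwards [Ioi_mem_nhds hx] with y hy
    rw [min_eq_left (le_of_lt hy)]

theorem hasDerivAt_comp_projIcc (hf : ∀ x, HasDerivAt f (f' x) x) {a b : ℝ} (hab : a ≤ b)
    (ha : f' a = 0) (hb : f' b = 0) (x : ℝ) :
    HasDerivAt (fun y => f (Set.projIcc a b hab y)) (f' (Set.projIcc a b hab x)) x :=
  -- `(projIcc a b hab y : ℝ)` unfolds to `max a (min b y)`
  hasDerivAt_comp_min (hasDerivAt_comp_max hf ha) (by rwa [max_eq_right hab]) x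

end ClampDerivative

theorem contDiff_eval_projIcc {a b : ℝ} (hab : a ≤ b) (r : ℕ) (p : ℝ[X])
    (hp : ∀ k, 1 ≤ k → k ≤ r →
      (derivative^[k] p).eval a = 0 ∧ (derivative^[k] p).eval b = 0) :
    ContDiff ℝ r (fun x => p.eval (Set.projIcc a b hab x : ℝ)) := by
  induction r generalizing p with
  | zero =>
    rw [Nat.cast_zero, contDiff_zero]
    exact p.continuous.comp (continuous_subtype_val.comp continuous_projIcc)
  | succ r ih =>
    obtain ⟨ha, hb⟩ := hp 1 le_rfl (by omega)
    have hderiv := hasDerivAt_comp_projIcc (fun x => p.hasDerivAt x) hab ha hb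
    rw [Nat.cast_succ, contDiff_succ_iff_deriv]
    refine ⟨fun x => (hderiv x).differentiableAt, by simp, ?_⟩
    rw [funext fun x => (hderiv x).deriv]
    refine ih _ fun k hk hkr => ?_
    simpa only [← Function.iterate_succ_apply] using hp (k + 1) (by omega) (by omega)

section BernsteinTail

variable (R : Type*) [CommRing R]

noncomputable def bernsteinTail (n φ : ℕ) : R[X] :=
  ∑ ν ∈ Finset.Ico φ (n + 1), bernsteinPolynomial R n ν

theorem bernsteinTail_eq_one_sub {n φ : ℕ} (hφ : φ ≤ n + 1) :
    bernsteinTail R n φ = 1 - ∑ ν ∈ Finset.range φ, bernsteinPolynomial R n ν := by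
  rw [eq_sub_iff_add_eq', bernsteinTail, Finset.sum_range_add_sum_Ico _ hφ,
    bernsteinPolynomial.sum]

theorem iterate_derivative_bernsteinTail_eval_zero (n : ℕ) {φ k : ℕ} (hk : k < φ) :
    (derivative^[k] (bernsteinTail R n φ)).eval 0 = 0 := by
  rw [bernsteinTail, iterate_derivative_sum, eval_finsetSum]
  exact Finset.sum_eq_zero fun ν hν =>
    bernsteinPolynomial.iterate_derivative_at_0_eq_zero_of_lt R n
      (hk.trans_le (Finset.mem_Ico.mp hν).1)

theorem iterate_derivative_bernsteinTail_eval_one {n φ k : ℕ} (hk : 0 < k)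
    (hkφ : k + φ ≤ n) :
    (derivative^[k] (bernsteinTail R n φ)).eval 1 = 0 := by
  rw [bernsteinTail_eq_one_sub R (by omega), iterate_derivative_sub, iterate_derivative_one hk,
    iterate_derivative_sum, eval_sub, eval_finsetSum, eval_zero, zero_sub, neg_eq_zero]
  exact Finset.sum_eq_zero fun ν hν =>
    bernsteinPolynomial.iterate_derivative_at_1_eq_zero_of_lt R n
      (by have := Finset.mem_range.mp hν; omega)

theorem bernsteinTail_eval_zero (n : ℕ) {φ : ℕ} (hφ : 0 < φ) :
    (bernsteinTail R n φ).eval 0 = 0 :=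
  iterate_derivative_bernsteinTail_eval_zero R n hφ

theorem bernsteinTail_eval_one {n φ : ℕ} (hφ : φ ≤ n) :
    (bernsteinTail R n φ).eval 1 = 1 := by
  rw [bernsteinTail_eq_one_sub R (by omega), eval_sub, eval_one, eval_finsetSum, sub_eq_self]
  refine Finset.sum_eq_zero fun ν hν => ?_
  rw [bernsteinPolynomial.eval_at_1, if_neg (by have := Finset.mem_range.mp hν; omega)]

end BernsteinTail

noncomputable def bernsteinStep (n φ : ℕ) (s : ℝ) : ℝ :=
  (bernsteinTail ℝ n φ).eval (Set.projIcc 0 1 zero_le_one s : ℝ)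

theorem bernsteinStep_of_mem {n φ : ℕ} {s : ℝ} (hs : s ∈ Set.Icc (0 : ℝ) 1) :
    bernsteinStep n φ s = (bernsteinTail ℝ n φ).eval s := by
  rw [bernsteinStep, Set.projIcc_of_mem _ hs]

theorem bernsteinStep_of_nonpos {n φ : ℕ} (hφ : 0 < φ) {s : ℝ} (hs : s ≤ 0) :
    bernsteinStep n φ s = 0 := by
  rw [bernsteinStep, Set.projIcc_of_le_left _ hs, bernsteinTail_eval_zero ℝ n hφ]

theorem bernsteinStep_of_one_le {n φ : ℕ} (hφ : φ ≤ n) {s : ℝ} (hs : 1 ≤ s) :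
    bernsteinStep n φ s = 1 := by
  rw [bernsteinStep, Set.projIcc_of_right_le _ hs, bernsteinTail_eval_one ℝ hφ]

theorem contDiff_bernsteinStep {n φ : ℕ} (hn : 2 * φ - 1 ≤ n) :
    ContDiff ℝ (φ - 1 : ℕ) (bernsteinStep n φ) :=
  contDiff_eval_projIcc zero_le_one (φ - 1) (bernsteinTail ℝ n φ) fun _ hk hkφ =>
    ⟨iterate_derivative_bernsteinTail_eval_zero ℝ n (by omega),
      iterate_derivative_bernsteinTail_eval_one ℝ (by omega) (by omega)⟩

theorem bernsteinBasis_eq_eval (n k : ℕ) (t : ℝ) :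
    bernsteinBasis n k t = (bernsteinPolynomial ℝ n k).eval t := by
  simp [bernsteinBasis, bernsteinPolynomial]

theorem sum_bernsteinBasis_smul_ite {E : Type*} [AddCommGroup E] [Module ℝ E] {n φ : ℕ}
    (hφ : φ ≤ n + 1) (a b : E) (s : ℝ) :
    ∑ k ∈ Finset.range (n + 1), bernsteinBasis n k s • (if k < φ then a else b) =
      AffineMap.lineMap a b ((bernsteinTail ℝ n φ).eval s) := by
  have hhead :
      ∑ k ∈ Finset.range φ, bernsteinBasis n k s = 1 - (bernsteinTail ℝ n φ).eval s := by
    simp only [bernsteinTail_eq_one_sub ℝ hφ, eval_sub, eval_one, eval_finsetSum,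
      bernsteinBasis_eq_eval, sub_sub_cancel]
  have htail :
      ∑ k ∈ Finset.Ico φ (n + 1), bernsteinBasis n k s = (bernsteinTail ℝ n φ).eval s := by
    simp only [bernsteinTail, eval_finsetSum, bernsteinBasis_eq_eval]
  rw [← Finset.sum_range_add_sum_Ico _ hφ, AffineMap.lineMap_apply_module, ← hhead, ← htail,
    Finset.sum_smul, Finset.sum_smul]
  congr 1
  · exact Finset.sum_congr rfl fun k hk => by rw [if_pos (Finset.mem_range.mp hk)]
  · exact Finset.sum_congr rfl fun k hk => by rw [if_neg (Finset.mem_Ico.mp hk).1.not_gt]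

section WaypointCurve

variable {E : Type*} [AddCommGroup E] [Module ℝ E]

def waypointCurve (G : ℝ → ℝ) (w : ℕ → E) (M : ℕ) (t : ℝ) : E :=
  w 0 + ∑ l ∈ Finset.range M, G (t - l) • (w (l + 1) - w l)

theorem waypointCurve_eq_lineMap {G : ℝ → ℝ} (hG0 : ∀ s ≤ 0, G s = 0)
    (hG1 : ∀ s, 1 ≤ s → G s = 1) (w : ℕ → E) {M m : ℕ} (hm : 1 ≤ m) (hmM : m ≤ M) {t : ℝ}
    (ht : t ∈ Set.Icc ((m : ℝ) - 1) m) :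
    waypointCurve G w M t = AffineMap.lineMap (w (m - 1)) (w m) (G (t - (m - 1))) := by
  obtain ⟨p, rfl⟩ : ∃ p, m = p + 1 := ⟨m - 1, by omega⟩
  push_cast at ht ⊢
  simp only [add_sub_cancel_right] at ht ⊢
  have hbefore : ∑ l ∈ Finset.range p, G (t - l) • (w (l + 1) - w l) = w p - w 0 := by
    rw [← Finset.sum_range_sub]
    refine Finset.sum_congr rfl fun l hl => ?_
    have : (l : ℝ) + 1 ≤ p := by exact_mod_cast Finset.mem_range.mp hl
    rw [hG1 _ (by linarith [ht.1]), one_smul]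
  have hafter : ∑ l ∈ Finset.Ico (p + 1) M, G (t - l) • (w (l + 1) - w l) = 0 := by
    refine Finset.sum_eq_zero fun l hl => ?_
    have : (p : ℝ) + 1 ≤ l := by exact_mod_cast (Finset.mem_Ico.mp hl).1
    rw [hG0 _ (by linarith [ht.2]), zero_smul]
  rw [waypointCurve, ← Finset.sum_range_add_sum_Ico _ hmM, hafter, Finset.sum_range_succ,
    hbefore, AffineMap.lineMap_apply_module']
  abel

end WaypointCurve

theorem contDiff_waypointCurve {F : Type*} [NormedAddCommGroup F] [NormedSpace ℝ F]
    {G : ℝ → ℝ} {r : WithTop ℕ∞} (hG : ContDiff ℝ r G) (w : ℕ → F) (M : ℕ) :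
    ContDiff ℝ r (waypointCurve G w M) :=
  contDiff_const.add <| ContDiff.sum fun _ _ =>
    (hG.comp (contDiff_id.sub contDiff_const)).smul contDiff_const

theorem optimization_constraints_feasible_general (φ n M N : ℕ)
    (hφ : 1 ≤ φ) (hn : 2 * φ - 1 ≤ n)
    (wp : ℕ → ℕ → EuclideanSpace ℝ (Fin 3))
    (S : ℕ → ℕ → Set (EuclideanSpace ℝ (Fin 3)))
    (hSseg : ∀ i m, 1 ≤ i → i ≤ N → 1 ≤ m → m ≤ M →
      segment ℝ (wp i (m - 1)) (wp i m) ⊆ S i m)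
    (R : ℕ → ℕ → ℕ → Set (EuclideanSpace ℝ (Fin 3)))
    (hRseg : ∀ i j m, 1 ≤ i → i < j → j ≤ N → 1 ≤ m → m ≤ M →
      segment ℝ (wp j (m - 1) - wp i (m - 1)) (wp j m - wp i m) ⊆ R i j m) :
    ∃ c : ℕ → ℕ → ℕ → EuclideanSpace ℝ (Fin 3),
      -- the control points have the prescribed form
      (∀ i m, 1 ≤ i → i ≤ N → 1 ≤ m → m ≤ M →
        (∀ k ≤ φ - 1, c i m k = wp i (m - 1)) ∧
        (∀ k, n - φ + 1 ≤ k → k ≤ n → c i m k = wp i m) ∧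
        (∀ k ≤ n, c i m k ∈ segment ℝ (wp i (m - 1)) (wp i m))) ∧
      -- (1) start and goal waypoint constraints
      (∀ i, 1 ≤ i → i ≤ N → c i 1 0 = wp i 0 ∧ c i M n = wp i M) ∧
      -- (2) the piecewise Bernstein curve is well defined and `C^{φ-1}` on `[0, M]`
      (∀ i, 1 ≤ i → i ≤ N → ∃ P : ℝ → EuclideanSpace ℝ (Fin 3),
        ContDiffOn ℝ (φ - 1 : ℕ) P (Set.Icc (0 : ℝ) M) ∧
        ∀ m, 1 ≤ m → m ≤ M → ∀ t ∈ Set.Icc ((m : ℝ) - 1) (m : ℝ),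
          P t = ∑ k ∈ Finset.range (n + 1), bernsteinBasis n k (t - ((m : ℝ) - 1)) • c i m k) ∧
      -- (3) safe flight corridor constraints
      (∀ i m k, 1 ≤ i → i ≤ N → 1 ≤ m → m ≤ M → k ≤ n → c i m k ∈ S i m) ∧
      -- (4) relative safe flight corridor constraints
      (∀ i j m k, 1 ≤ i → i < j → j ≤ N → 1 ≤ m → m ≤ M → k ≤ n →
        c j m k - c i m k ∈ R i j m) := by
  let c : ℕ → ℕ → ℕ → EuclideanSpace ℝ (Fin 3) := fun i m k =>
    if k < φ then wp i (m - 1) else wp i m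
  have hc_mem : ∀ i m k, c i m k ∈ segment ℝ (wp i (m - 1)) (wp i m) := fun i m k => by
    by_cases hk : k < φ <;> simp [c, hk, left_mem_segment, right_mem_segment]
  have hc_sub_mem : ∀ i j m k,
      c j m k - c i m k ∈ segment ℝ (wp j (m - 1) - wp i (m - 1)) (wp j m - wp i m) :=
    fun i j m k => by by_cases hk : k < φ <;> simp [c, hk, left_mem_segment, right_mem_segment]
  refine ⟨c, fun i m _ _ _ _ => ⟨fun k _ => if_pos (by omega), fun k _ _ => if_neg (by omega),
      fun k _ => hc_mem i m k⟩, fun i _ _ => ⟨if_pos hφ, if_neg (by omega)⟩,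
    fun i _ _ => ⟨waypointCurve (bernsteinStep n φ) (wp i) M,
      (contDiff_waypointCurve (contDiff_bernsteinStep hn) _ _).contDiffOn, ?_⟩,
    fun i m k hi hiN hm hmM _ => hSseg i m hi hiN hm hmM (hc_mem i m k),
    fun i j m k hi hij hj hm hmM _ => hRseg i j m hi hij hj hm hmM (hc_sub_mem i j m k)⟩
  intro m hm hmM t ht
  have hs : t - (m - 1) ∈ Set.Icc (0 : ℝ) 1 := ⟨by linarith [ht.1], by linarith [ht.2]⟩
  rw [waypointCurve_eq_lineMap (fun _ => bernsteinStep_of_nonpos hφ)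
      (fun _ => bernsteinStep_of_one_le (by omega)) _ hm hmM ht,
    sum_bernsteinBasis_smul_ite (by omega), bernsteinStep_of_mem hs]

/-- Theorem 1 (feasibility of the optimization constraints): given waypoints `wp i m`,
convex safe flight corridors `S i m` containing the segments `[wp i (m-1), wp i m]`, and
convex relative safe flight corridors `R i j m` containing the relative segments, if
`n ≥ 2φ - 1` then there exist control points — equal to `wp i (m-1)` for the first `φ`
indices, to `wp i m` for the last `φ` indices, and otherwise lying on the segment —
such that the resulting piecewise Bernstein trajectories satisfy the waypoint,
continuity (up to order `φ-1`), SFC and RSFC constraints. -/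
theorem optimization_constraints_feasible (φ n M N : ℕ)
    (hφ : 1 ≤ φ) (hn : 2 * φ - 1 ≤ n) (hM : 1 ≤ M) (hN : 1 ≤ N)
    (wp : ℕ → ℕ → EuclideanSpace ℝ (Fin 3))
    (S : ℕ → ℕ → Set (EuclideanSpace ℝ (Fin 3)))
    (hSconv : ∀ i m, 1 ≤ i → i ≤ N → 1 ≤ m → m ≤ M → Convex ℝ (S i m))
    (hSseg : ∀ i m, 1 ≤ i → i ≤ N → 1 ≤ m → m ≤ M →
      segment ℝ (wp i (m - 1)) (wp i m) ⊆ S i m)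
    (R : ℕ → ℕ → ℕ → Set (EuclideanSpace ℝ (Fin 3)))
    (hRconv : ∀ i j m, 1 ≤ i → i < j → j ≤ N → 1 ≤ m → m ≤ M → Convex ℝ (R i j m))
    (hRseg : ∀ i j m, 1 ≤ i → i < j → j ≤ N → 1 ≤ m → m ≤ M →
      segment ℝ (wp j (m - 1) - wp i (m - 1)) (wp j m - wp i m) ⊆ R i j m) :
    ∃ c : ℕ → ℕ → ℕ → EuclideanSpace ℝ (Fin 3),
      -- the control points have the prescribed form
      (∀ i m, 1 ≤ i → i ≤ N → 1 ≤ m → m ≤ M →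
        (∀ k ≤ φ - 1, c i m k = wp i (m - 1)) ∧
        (∀ k, n - φ + 1 ≤ k → k ≤ n → c i m k = wp i m) ∧
        (∀ k ≤ n, c i m k ∈ segment ℝ (wp i (m - 1)) (wp i m))) ∧
      -- (1) start and goal waypoint constraints
      (∀ i, 1 ≤ i → i ≤ N → c i 1 0 = wp i 0 ∧ c i M n = wp i M) ∧
      -- (2) the piecewise Bernstein curve is well defined and `C^{φ-1}` on `[0, M]`
      (∀ i, 1 ≤ i → i ≤ N → ∃ P : ℝ → EuclideanSpace ℝ (Fin 3),
        ContDiffOn ℝ (φ - 1 : ℕ) P (Set.Icc (0 : ℝ) M) ∧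
        ∀ m, 1 ≤ m → m ≤ M → ∀ t ∈ Set.Icc ((m : ℝ) - 1) (m : ℝ),
          P t = ∑ k ∈ Finset.range (n + 1), bernsteinBasis n k (t - ((m : ℝ) - 1)) • c i m k) ∧
      -- (3) safe flight corridor constraints
      (∀ i m k, 1 ≤ i → i ≤ N → 1 ≤ m → m ≤ M → k ≤ n → c i m k ∈ S i m) ∧
      -- (4) relative safe flight corridor constraints
      (∀ i j m k, 1 ≤ i → i < j → j ≤ N → 1 ≤ m → m ≤ M → k ≤ n →
        c j m k - c i m k ∈ R i j m) :=
  optimization_constraints_feasible_general φ n M N hφ hn wp S hSseg R hRseg
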